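/- Let n ≥ 2. For every integer k ≥ 1 there is a constant C_k, depending only on n and k, such that for every θ ∈ (0,1), every y in the closed upper half-space, and every x in the closed upper half-space with A(x,y,θ) > 0, the function x ↦ A(x,y,θ) is k times differentiable at x and its k-th iterated derivative satisfies ‖D_x^k A(x,y,θ)‖ ≤ C_k A(x,y,θ)^{1−k}. -/

import Mathlib

/-- `A(x,y,θ) = (θ D(x,y)² + (1−θ) Ď(x,y)²)^{1/2}`, where `D(x,y)² = |x−y|²` and
`Ď(x,y)² = |x−y|² − (xₙ−yₙ)² + (xₙ+yₙ)² ( = |x'−y'|² + (xₙ+yₙ)²)`,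
the `n`-th coordinate being the coordinate `i`. -/
noncomputable def greenA {n : ℕ} (i : Fin n) (x y : EuclideanSpace ℝ (Fin n)) (θ : ℝ) : ℝ :=
  Real.sqrt (θ * ‖x - y‖ ^ 2 +
    (1 - θ) * (‖x - y‖ ^ 2 - (x i - y i) ^ 2 + (x i + y i) ^ 2))

/-!
Completing the square in `xₙ` gives `A(x,y,θ)² = |x - z|² + r²` with
`z = y - 2(1-θ) yₙ eₙ` and `r = 2 √(θ(1-θ)) yₙ`, so `x ↦ A(x,y,θ)` is the Euclidean norm of
`(x - z, r) ∈ ℝⁿ × ℝ`, i.e. the norm composed with an affine isometric embedding. The `k`-th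
derivative of the norm of a finite-dimensional inner product space is homogeneous of degree
`1 - k`, hence bounded by `C ‖w‖^(1-k)` with `C` its maximum on the unit sphere, and composing
with an isometry does not increase the norm of iterated derivatives.
-/

open Set

section comp

variable {E F G : Type*} [NormedAddCommGroup E] [NormedSpace ℝ E] [NormedAddCommGroup F]
  [NormedSpace ℝ F] [NormedAddCommGroup G] [NormedSpace ℝ G]

theorem ContinuousLinearMap.iteratedFDeriv_comp_right_of_contDiffAt (L : E →L[ℝ] F) {f : F → G}
    {x : E} {k : ℕ} (hf : ContDiffAt ℝ k f (L x)) :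
    iteratedFDeriv ℝ k (f ∘ L) x =
      (iteratedFDeriv ℝ k f (L x)).compContinuousLinearMap fun _ => L := by
  obtain ⟨u, hu, hfu⟩ := hf.contDiffOn le_rfl (by simp)
  obtain ⟨t, htu, ht, hxt⟩ := mem_nhds_iff.1 hu
  have ht' : IsOpen (L ⁻¹' t) := ht.preimage L.continuous
  rw [← iteratedFDerivWithin_of_isOpen k ht' hxt, ← iteratedFDerivWithin_of_isOpen k ht hxt]
  exact L.iteratedFDerivWithin_comp_right (hfu.mono htu) ht.uniqueDiffOn ht'.uniqueDiffOn hxt le_rfl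

theorem ContinuousLinearMap.norm_iteratedFDeriv_comp_right_le (L : E →L[ℝ] F) {f : F → G}
    {x : E} {k : ℕ} (hf : ContDiffAt ℝ k f (L x)) :
    ‖iteratedFDeriv ℝ k (f ∘ L) x‖ ≤ ‖iteratedFDeriv ℝ k f (L x)‖ * ‖L‖ ^ k := by
  rw [L.iteratedFDeriv_comp_right_of_contDiffAt hf]
  simpa using ContinuousMultilinearMap.norm_compContinuousLinearMap_le _ fun _ : Fin k => L

end comp

section norm

variable {F : Type*} [NormedAddCommGroup F] [InnerProductSpace ℝ F]

theorem continuousOn_norm_iteratedFDeriv_norm (k : ℕ) :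
    ContinuousOn (fun w : F => ‖iteratedFDeriv ℝ k (‖·‖) w‖) {0}ᶜ := by
  have hs : IsOpen ({0}ᶜ : Set F) := isOpen_compl_singleton
  have hcd : ContDiffOn ℝ k (‖·‖) ({0}ᶜ : Set F) := fun w hw =>
    (contDiffAt_norm ℝ hw).contDiffWithinAt
  refine ((hcd.continuousOn_iteratedFDerivWithin le_rfl hs.uniqueDiffOn).congr
    fun w hw => ?_).norm
  exact (iteratedFDerivWithin_of_isOpen k hs hw).symm

theorem norm_iteratedFDeriv_norm_le_of_bound_on_sphere {k : ℕ} {M : ℝ}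
    (hM : ∀ u : F, ‖u‖ = 1 → ‖iteratedFDeriv ℝ k (‖·‖) u‖ ≤ M) {w : F} (hw : w ≠ 0) :
    ‖iteratedFDeriv ℝ k (‖·‖) w‖ ≤ M * ‖w‖ ^ ((1 : ℝ) - k) := by
  set c := ‖w‖
  have hc : 0 < c := norm_pos_iff.2 hw
  set g : F →L[ℝ] F := c⁻¹ • ContinuousLinearMap.id ℝ F
  have hgw : ‖g w‖ = 1 := by simp [g, norm_smul, c, hc.ne']
  have hg : ‖g‖ ≤ c⁻¹ := by
    refine ContinuousLinearMap.opNorm_le_bound _ (by positivity) fun v => ?_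
    simp [g, norm_smul, abs_of_pos hc]
  have hscale : (‖·‖ : F → ℝ) = c • ((‖·‖) ∘ g) := by
    ext v
    simp [g, norm_smul, c, hc.ne']
  have hsmooth : ContDiffAt ℝ k (‖·‖) (g w) :=
    contDiffAt_norm ℝ (by rw [← norm_pos_iff, hgw]; exact one_pos)
  calc ‖iteratedFDeriv ℝ k (‖·‖) w‖
      = ‖iteratedFDeriv ℝ k (c • ((‖·‖) ∘ g)) w‖ := by rw [← hscale]
    _ = c * ‖iteratedFDeriv ℝ k ((‖·‖) ∘ g) w‖ := by
        rw [iteratedFDeriv_const_smul_apply (hsmooth.comp w g.contDiff.contDiffAt), norm_smul,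
          Real.norm_of_nonneg hc.le]
    _ ≤ c * (M * c⁻¹ ^ k) := by
        gcongr
        refine (g.norm_iteratedFDeriv_comp_right_le hsmooth).trans ?_
        have := hM _ hgw
        gcongr
        exact (norm_nonneg _).trans this
    _ = M * c ^ ((1 : ℝ) - k) := by
        rw [Real.rpow_sub hc, Real.rpow_one, Real.rpow_natCast, inv_pow]
        field_simp

variable (F) in
theorem exists_norm_iteratedFDeriv_norm_le [FiniteDimensional ℝ F] (k : ℕ) :
    ∃ C : ℝ, 0 < C ∧ ∀ w : F, w ≠ 0 →
      ‖iteratedFDeriv ℝ k (‖·‖) w‖ ≤ C * ‖w‖ ^ ((1 : ℝ) - k) := by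
  have hsphere : Metric.sphere (0 : F) 1 ⊆ {0}ᶜ := fun u hu =>
    ne_zero_of_mem_sphere one_ne_zero ⟨u, hu⟩
  obtain ⟨M, hM⟩ := (isCompact_sphere (0 : F) 1).exists_bound_of_continuousOn
    ((continuousOn_norm_iteratedFDeriv_norm k).mono hsphere)
  refine ⟨max M 1, by positivity, fun w hw => norm_iteratedFDeriv_norm_le_of_bound_on_sphere
    (fun u hu => ?_) hw⟩
  have := hM u (by simpa using hu)
  rw [norm_norm] at this
  exact this.trans (le_max_left _ _)

end norm

section affine

variable {E F : Type*} [NormedAddCommGroup E] [NormedSpace ℝ E]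
  [NormedAddCommGroup F] [InnerProductSpace ℝ F]

theorem LinearIsometry.norm_iteratedFDeriv_norm_add_const_le (L : E →ₗᵢ[ℝ] F) (b : F) {x : E}
    (hx : L x + b ≠ 0) (k : ℕ) :
    ‖iteratedFDeriv ℝ k (fun x => ‖L x + b‖) x‖ ≤ ‖iteratedFDeriv ℝ k (‖·‖) (L x + b)‖ := by
  have hf : ContDiffAt ℝ k (fun w => ‖w + b‖) (L.toContinuousLinearMap x) :=
    (contDiffAt_norm ℝ hx).comp (L x) (contDiffAt_id.add contDiffAt_const)
  calc ‖iteratedFDeriv ℝ k ((fun w => ‖w + b‖) ∘ L.toContinuousLinearMap) x‖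
      ≤ ‖iteratedFDeriv ℝ k (fun w => ‖w + b‖) (L x)‖ * ‖L.toContinuousLinearMap‖ ^ k :=
        L.toContinuousLinearMap.norm_iteratedFDeriv_comp_right_le hf
    _ ≤ ‖iteratedFDeriv ℝ k (‖·‖) (L x + b)‖ := by
        rw [iteratedFDeriv_comp_add_right]
        exact mul_le_of_le_one_right (norm_nonneg _)
          (pow_le_one₀ (norm_nonneg _) L.norm_toContinuousLinearMap_le)

end affine

variable (α β : Type*) [SeminormedAddCommGroup α] [NormedSpace ℝ α]
  [SeminormedAddCommGroup β] [NormedSpace ℝ β] in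
def WithLp.inlₗᵢ : α →ₗᵢ[ℝ] WithLp 2 (α × β) where
  toFun a := WithLp.toLp 2 (a, 0)
  map_add' a a' := by simp [← WithLp.toLp_add]
  map_smul' c a := by simp [← WithLp.toLp_smul]
  norm_map' := WithLp.norm_toLp_fst 2 α β

theorem greenA_eq_norm_inl_add {n : ℕ} (i : Fin n) (x y : EuclideanSpace ℝ (Fin n)) {θ : ℝ}
    (hθ : θ ∈ Icc (0 : ℝ) 1) :
    greenA i x y θ = ‖WithLp.inlₗᵢ _ ℝ x + WithLp.toLp 2
      (-(y - ((2 - 2 * θ) * y i) • EuclideanSpace.single i 1), 2 * √(θ * (1 - θ)) * y i)‖ := by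
  set a := (2 - 2 * θ) * y i
  have hinner : inner ℝ (x - y) (a • EuclideanSpace.single i (1 : ℝ)) = a * (x i - y i) := by
    simp [real_inner_smul_right, EuclideanSpace.inner_single_right]
  have hsq : √(θ * (1 - θ)) ^ 2 = θ * (1 - θ) := Real.sq_sqrt (by nlinarith [hθ.1, hθ.2])
  have hsub : x + -(y - a • EuclideanSpace.single i 1) =
      (x - y) + a • EuclideanSpace.single i 1 := by
    abel
  rw [WithLp.prod_norm_eq_of_L2, greenA]
  simp only [WithLp.inlₗᵢ, LinearIsometry.coe_mk, LinearMap.coe_mk, AddHom.coe_mk,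
    ← WithLp.toLp_add, Prod.mk_add_mk, zero_add, WithLp.toLp_fst, WithLp.toLp_snd, hsub,
    norm_add_sq_real, hinner, norm_smul, PiLp.norm_single, norm_one, mul_one,
    Real.norm_eq_abs, sq_abs, mul_pow, hsq]
  congr 1
  simp only [a]
  ring

/-- For `n ≥ 2` and every integer `k ≥ 1` there is `C_k = C(n,k)` such that
for every `θ ∈ (0,1)`, every `y` in the closed upper half-space and every `x` in the closed
upper half-space with `A(x,y,θ) > 0`, the map `x ↦ A(x,y,θ)` is `k` times differentiable at
`x` with `‖Dₓᵏ A(x,y,θ)‖ ≤ C_k A(x,y,θ)^{1−k}`. -/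
theorem stmt_7 (n : ℕ) (hn : 2 ≤ n) (k : ℕ) :
    ∃ C : ℝ, 0 < C ∧
      ∀ θ ∈ Set.Ioo (0 : ℝ) 1, ∀ y : EuclideanSpace ℝ (Fin n),
        0 ≤ y ⟨n - 1, by omega⟩ →
        ∀ x : EuclideanSpace ℝ (Fin n), 0 ≤ x ⟨n - 1, by omega⟩ →
          0 < greenA ⟨n - 1, by omega⟩ x y θ →
          ContDiffAt ℝ k (fun x => greenA ⟨n - 1, by omega⟩ x y θ) x ∧
          ‖iteratedFDeriv ℝ k (fun x => greenA ⟨n - 1, by omega⟩ x y θ) x‖ ≤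
            C * greenA ⟨n - 1, by omega⟩ x y θ ^ ((1 : ℝ) - k) := by
  obtain ⟨C, hC, hnorm⟩ :=
    exists_norm_iteratedFDeriv_norm_le (WithLp 2 (EuclideanSpace ℝ (Fin n) × ℝ)) k
  refine ⟨C, hC, fun θ hθ y _ x _ hA => ?_⟩
  set i : Fin n := ⟨n - 1, by omega⟩
  set L := WithLp.inlₗᵢ (EuclideanSpace ℝ (Fin n)) ℝ
  set b := WithLp.toLp 2
    (-(y - ((2 - 2 * θ) * y i) • EuclideanSpace.single i 1), 2 * √(θ * (1 - θ)) * y i)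
  have hA_eq (x) : greenA i x y θ = ‖L x + b‖ :=
    greenA_eq_norm_inl_add i x y (Ioo_subset_Icc_self hθ)
  have hne : L x + b ≠ 0 := norm_pos_iff.1 (hA_eq x ▸ hA)
  simp only [hA_eq]
  exact ⟨(contDiffAt_norm ℝ hne).comp x (L.contDiff.add contDiff_const).contDiffAt,
    (L.norm_iteratedFDeriv_norm_add_const_le b hne k).trans (hnorm _ hne)⟩
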